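/- arXiv:2510.09429 — 3 statements merged into one kernel-verified Lean document; each statement's English description precedes it below -/
import Mathlib

section
/- If the order-reversing permutation w_0 sending i to n+1-i induces an automorphism of the labeled graph G (preserving adjacency of labels), then MTub(G) is self-dual. In particular MTub(P_n) and MTub(C_n) are self-dual, where P_n is the path 1-2-...-n and C_n is the cycle 1-2-...-n-1. -/
/-!
The reversal `i ↦ n + 1 - i` is a graph automorphism of `G`, so relabelling by it maps tubes to
tubes, maximal tubings to maximal tubings, and the smallest tube `T↓(x)` of `T` to the smallest
tube containing `rev x` of the relabelled tubing. A flip exchanges one tube and raises its top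
label; since the reversal is order-reversing, the relabelled flip lowers the top label, i.e. it is
a flip in the opposite direction. Hence relabelling is an involutive anti-automorphism of
`MTub(G)`. Path and cycle are invariant under the reversal.
-/

open Finset

section TubingDefs

variable {n : ℕ}

/-- A tube of a graph: a nonempty vertex subset inducing a connected subgraph. -/
def IsTube (G : SimpleGraph (Fin n)) (X : Finset (Fin n)) : Prop :=
  X.Nonempty ∧ (G.induce (X : Set (Fin n))).Connected

/-- Tubes are compatible if nested or with disconnected union. -/
def TubeCompatible (G : SimpleGraph (Fin n)) (X Y : Finset (Fin n)) : Prop :=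
  X ⊆ Y ∨ Y ⊆ X ∨ ¬ IsTube G (X ∪ Y)

def IsTubing (G : SimpleGraph (Fin n)) (T : Finset (Finset (Fin n))) : Prop :=
  (∀ X ∈ T, IsTube G X) ∧ ∀ X ∈ T, ∀ Y ∈ T, TubeCompatible G X Y

def IsMaxTubing (G : SimpleGraph (Fin n)) (T : Finset (Finset (Fin n))) : Prop :=
  IsTubing G T ∧ ∀ T', IsTubing G T' → T ⊆ T' → T' = T

/-- The smallest tube of `T` containing `x`: the intersection of all tubes of `T`
containing `x`. -/
def tubingDown (T : Finset (Finset (Fin n))) (x : Fin n) : Finset (Fin n) :=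
  Finset.univ.filter (fun y => ∀ X ∈ T, x ∈ X → y ∈ X)

/-- The G-tree order of a tubing: `x ≤_T y` iff `x` lies in the smallest tube containing `y`. -/
def treeLE (T : Finset (Finset (Fin n))) (x y : Fin n) : Prop :=
  x ∈ tubingDown T y

/-- `y` covers `x` in the G-tree order of `T`. -/
def TreeCovBy (T : Finset (Finset (Fin n))) (x y : Fin n) : Prop :=
  treeLE T x y ∧ x ≠ y ∧ ∀ z, treeLE T x z → treeLE T z y → z = x ∨ z = y

/-- Flip cover relation on maximal tubings: exchange exactly one tube, with the
top (least-nested) element of the exchanged tube increasing. -/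
def FlipCover (G : SimpleGraph (Fin n)) (T J : Finset (Finset (Fin n))) : Prop :=
  IsMaxTubing G T ∧ IsMaxTubing G J ∧
  ∃ X Y, X ∈ T ∧ Y ∈ J ∧ X ≠ Y ∧ T.erase X = J.erase Y ∧
    ∃ x y : Fin n, tubingDown T x = X ∧ tubingDown J y = Y ∧ x < y

/-- The order of the poset of maximal tubings, generated by flip covers. -/
def MTubLE (G : SimpleGraph (Fin n)) :
    Finset (Finset (Fin n)) → Finset (Finset (Fin n)) → Prop :=
  Relation.ReflTransGen (FlipCover G)

/-- Inversions: pairs `i < j` with `j <_T i` in the G-tree. -/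
def invSet (T : Finset (Finset (Fin n))) : Set (Fin n × Fin n) :=
  {p | p.1 < p.2 ∧ treeLE T p.2 p.1}

/-- Coinversions: pairs `i < j` with `i <_T j` in the G-tree. -/
def coinvSet (T : Finset (Finset (Fin n))) : Set (Fin n × Fin n) :=
  {p | p.1 < p.2 ∧ treeLE T p.1 p.2}

/-- Incomparable pairs `i < j` of the G-tree. -/
def incSet (T : Finset (Finset (Fin n))) : Set (Fin n × Fin n) :=
  {p | p.1 < p.2 ∧ ¬ treeLE T p.1 p.2 ∧ ¬ treeLE T p.2 p.1}

/-- The cut of the tube `J↓(x)`, where `m` is the root of the G-tree of `J`. -/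
def cutTube (J : Finset (Finset (Fin n))) (m x : Fin n) : Finset (Fin n) :=
  if x = m then tubingDown J x
  else if x < m then (tubingDown J x).filter (fun y => y < m)
  else (tubingDown J x).filter (fun y => m < y)

/-- The Cut map on maximal tubings of the cycle. -/
def CutTubing (J : Finset (Finset (Fin n))) (m : Fin n) : Finset (Finset (Fin n)) :=
  Finset.image (cutTube J m) Finset.univ

/-- Inversions of a word: pairs `i < j` such that `j` appears before `i`. -/
def listInvSet (w : List (Fin n)) : Set (Fin n × Fin n) :=
  {p | p.1 < p.2 ∧ p.1 ∈ w ∧ p.2 ∈ w ∧ w.idxOf p.2 < w.idxOf p.1}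

end TubingDefs

/-- The path graph `1 - 2 - ⋯ - n`. -/
def pathGraph (n : ℕ) : SimpleGraph (Fin n) :=
  SimpleGraph.fromRel (fun a b => (a : ℕ) + 1 = (b : ℕ))

/-- The cycle graph `1 - 2 - ⋯ - n - 1`. -/
def cycleGraph (n : ℕ) : SimpleGraph (Fin n) :=
  SimpleGraph.fromRel (fun a b => (a : ℕ) + 1 = (b : ℕ) ∨ ((a : ℕ) = 0 ∧ (b : ℕ) = n - 1))

/-- The poset of maximal tubings of `G` is self-dual (anti-isomorphic to itself). -/
def MTubSelfDual {n : ℕ} (G : SimpleGraph (Fin n)) : Prop :=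
  ∃ φ : {T : Finset (Finset (Fin n)) // IsMaxTubing G T} ≃
        {T : Finset (Finset (Fin n)) // IsMaxTubing G T},
    ∀ T T', MTubLE G T.1 T'.1 ↔ MTubLE G (φ T').1 (φ T).1

section Relabel

variable {n : ℕ}

def relabelTubing (σ : Fin n ≃ Fin n) (T : Finset (Finset (Fin n))) : Finset (Finset (Fin n)) :=
  T.map σ.finsetCongr.toEmbedding

theorem mem_relabelTubing {σ : Fin n ≃ Fin n} {T : Finset (Finset (Fin n))}
    {X : Finset (Fin n)} : X ∈ relabelTubing σ T ↔ X.map σ.symm.toEmbedding ∈ T := by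
  rw [relabelTubing, Finset.mem_map_equiv, Equiv.finsetCongr_symm, Equiv.finsetCongr_apply]

theorem relabelTubing_symm_relabelTubing (σ : Fin n ≃ Fin n) (T : Finset (Finset (Fin n))) :
    relabelTubing σ.symm (relabelTubing σ T) = T := by
  ext X
  simp [mem_relabelTubing, Finset.map_map]

theorem tubingDown_relabelTubing (σ : Fin n ≃ Fin n) (T : Finset (Finset (Fin n))) (x : Fin n) :
    tubingDown (relabelTubing σ T) (σ x) = (tubingDown T x).map σ.toEmbedding := by
  ext y
  simp only [tubingDown, Finset.mem_filter, Finset.mem_univ, true_and, Finset.mem_map_equiv,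
    mem_relabelTubing]
  constructor
  · intro h X hX hx
    simpa using h (X.map σ.toEmbedding) (by simpa [Finset.map_map]) (by simpa)
  · intro h X hX hx
    simpa using h _ hX (by simpa)

end Relabel

namespace SimpleGraph.Iso

variable {n : ℕ} {G G' : SimpleGraph (Fin n)}

theorem isTube_map (e : G ≃g G') (X : Finset (Fin n)) :
    IsTube G' (X.map e.toEquiv.toEmbedding) ↔ IsTube G X := by
  have hbij : Set.BijOn e (X : Set (Fin n)) (X.map e.toEquiv.toEmbedding : Set (Fin n)) := by
    rw [Finset.coe_map]
    exact e.injective.injOn.bijOn_image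
  rw [IsTube, IsTube, Finset.map_nonempty, (e.induce hbij).connected_iff]

theorem tubeCompatible_map (e : G ≃g G') (X Y : Finset (Fin n)) :
    TubeCompatible G' (X.map e.toEquiv.toEmbedding) (Y.map e.toEquiv.toEmbedding) ↔
      TubeCompatible G X Y := by
  rw [TubeCompatible, TubeCompatible, Finset.map_subset_map, Finset.map_subset_map,
    ← Finset.map_union, isTube_map]

end SimpleGraph.Iso

section GraphIso

variable {n : ℕ} {G G' : SimpleGraph (Fin n)}

theorem IsTubing.relabel (e : G ≃g G') {T : Finset (Finset (Fin n))} (hT : IsTubing G T) :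
    IsTubing G' (relabelTubing e.toEquiv T) := by
  constructor
  · intro X hX
    rw [mem_relabelTubing] at hX
    exact (e.symm.isTube_map X).1 (hT.1 _ hX)
  · intro X hX Y hY
    rw [mem_relabelTubing] at hX hY
    exact (e.symm.tubeCompatible_map X Y).1 (hT.2 _ hX _ hY)

theorem IsMaxTubing.relabel (e : G ≃g G') {T : Finset (Finset (Fin n))} (hT : IsMaxTubing G T) :
    IsMaxTubing G' (relabelTubing e.toEquiv T) := by
  refine ⟨hT.1.relabel e, fun T' hT' hsub => ?_⟩
  have hsub' : T ⊆ relabelTubing e.symm.toEquiv T' := by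
    rw [← relabelTubing_symm_relabelTubing e.toEquiv T]
    exact Finset.map_subset_map.2 hsub
  rw [← hT.2 _ (hT'.relabel e.symm) hsub']
  exact (relabelTubing_symm_relabelTubing e.symm.toEquiv T').symm

theorem isMaxTubing_relabel_iff (e : G ≃g G') {T : Finset (Finset (Fin n))} :
    IsMaxTubing G' (relabelTubing e.toEquiv T) ↔ IsMaxTubing G T := by
  refine ⟨fun h => ?_, IsMaxTubing.relabel e⟩
  rw [← relabelTubing_symm_relabelTubing e.toEquiv T]
  exact h.relabel e.symm

theorem FlipCover.relabel_of_strictAnti (e : G ≃g G') (he : StrictAnti e)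
    {T J : Finset (Finset (Fin n))} (h : FlipCover G T J) :
    FlipCover G' (relabelTubing e.toEquiv J) (relabelTubing e.toEquiv T) := by
  obtain ⟨hT, hJ, X, Y, hXT, hYJ, hXY, herase, x, y, rfl, rfl, hxy⟩ := h
  refine ⟨hJ.relabel e, hT.relabel e, _, _, Finset.mem_map_of_mem _ hYJ,
    Finset.mem_map_of_mem _ hXT, fun h => hXY (Finset.map_injective _ h).symm, ?_,
    e y, e x, tubingDown_relabelTubing _ J y, tubingDown_relabelTubing _ T x, he hxy⟩
  simp only [relabelTubing, ← Finset.map_erase, herase]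

theorem MTubLE.relabel_of_strictAnti (e : G ≃g G') (he : StrictAnti e)
    {T J : Finset (Finset (Fin n))} (h : MTubLE G T J) :
    MTubLE G' (relabelTubing e.toEquiv J) (relabelTubing e.toEquiv T) := by
  induction h with
  | refl => exact Relation.ReflTransGen.refl
  | tail _ hstep ih => exact Relation.ReflTransGen.head (hstep.relabel_of_strictAnti e he) ih

theorem mtubSelfDual_of_strictAnti (e : G ≃g G) (he : StrictAnti e) : MTubSelfDual G := by
  have he_symm : StrictAnti e.symm := fun a b hab =>
    he.lt_iff_gt.1 (by rwa [e.apply_symm_apply, e.apply_symm_apply])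
  refine ⟨e.toEquiv.finsetCongr.finsetCongr.subtypeEquiv
    fun T => (isMaxTubing_relabel_iff e).symm, fun T T' => ⟨fun h => ?_, fun h => ?_⟩⟩
  · exact h.relabel_of_strictAnti e he
  · have := h.relabel_of_strictAnti e.symm he_symm
    change MTubLE G (relabelTubing e.toEquiv.symm (relabelTubing e.toEquiv T))
      (relabelTubing e.toEquiv.symm (relabelTubing e.toEquiv T')) at this
    rwa [relabelTubing_symm_relabelTubing, relabelTubing_symm_relabelTubing] at this

end GraphIso

theorem mtubSelfDual_of_adj_rev {n : ℕ} {G : SimpleGraph (Fin n)}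
    (hG : ∀ a b : Fin n, G.Adj a.rev b.rev ↔ G.Adj a b) : MTubSelfDual G :=
  mtubSelfDual_of_strictAnti ⟨Fin.revPerm, hG _ _⟩ Fin.rev_strictAnti

theorem pathGraph_adj_rev {n : ℕ} (a b : Fin n) :
    (pathGraph n).Adj a.rev b.rev ↔ (pathGraph n).Adj a b := by
  simp only [pathGraph, SimpleGraph.fromRel_adj, Fin.val_rev, ne_eq, Fin.rev_inj]
  omega

theorem cycleGraph_adj_rev {n : ℕ} (a b : Fin n) :
    (cycleGraph n).Adj a.rev b.rev ↔ (cycleGraph n).Adj a b := by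
  simp only [cycleGraph, SimpleGraph.fromRel_adj, Fin.val_rev, ne_eq, Fin.rev_inj]
  omega

/-- If the order-reversing permutation `w₀ : i ↦ n+1-i` induces an automorphism of the
labeled graph `G`, then `MTub(G)` is self-dual; in particular `MTub(Pₙ)` and `MTub(Cₙ)`
are self-dual. -/
theorem mtub_selfDual (n : ℕ) (G : SimpleGraph (Fin n))
    (hG : ∀ a b : Fin n, G.Adj a.rev b.rev ↔ G.Adj a b) :
    MTubSelfDual G ∧ MTubSelfDual (pathGraph n) ∧ MTubSelfDual (cycleGraph n) :=
  ⟨mtubSelfDual_of_adj_rev hG, mtubSelfDual_of_adj_rev pathGraph_adj_rev,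
    mtubSelfDual_of_adj_rev cycleGraph_adj_rev⟩
end

section
/- Let T be a maximal tubing of a connected graph G on [n]. Define x ≤_T y iff x belongs to the smallest tube of T containing y. Then in the resulting partial order on [n], every element has at most one cover, so the Hasse diagram of ≤_T is a rooted tree (the G-tree of T). -/
open Finset

/- Two tubes of a tubing that share a vertex have a connected union, so compatibility forces
them to be nested. Hence the elements above a given `x` in `≤_T` form a chain, and two covers
of `x` are comparable, which for covers means equal. -/

section GTree

variable {n : ℕ} {G : SimpleGraph (Fin n)} {T : Finset (Finset (Fin n))}

lemma treeLE_iff {x y : Fin n} : treeLE T x y ↔ ∀ X ∈ T, y ∈ X → x ∈ X := by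
  simp only [treeLE, tubingDown, mem_filter, mem_univ, true_and]

lemma not_treeLE_iff {x y : Fin n} : ¬ treeLE T x y ↔ ∃ X ∈ T, y ∈ X ∧ x ∉ X := by
  simp only [treeLE_iff, not_forall, exists_prop]

lemma IsTube.union {X Y : Finset (Fin n)} (hX : IsTube G X) (hY : IsTube G Y)
    (hXY : (X ∩ Y).Nonempty) : IsTube G (X ∪ Y) := by
  obtain ⟨x, hx⟩ := hXY
  rw [mem_inter] at hx
  refine ⟨hX.1.mono subset_union_left, ?_⟩
  rw [coe_union]
  exact SimpleGraph.induce_union_connected hX.2.preconnected hY.2.preconnected ⟨x, hx⟩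

lemma IsTubing.subset_or_subset {X Y : Finset (Fin n)} (hT : IsTubing G T) (hX : X ∈ T)
    (hY : Y ∈ T) (hXY : (X ∩ Y).Nonempty) : X ⊆ Y ∨ Y ⊆ X :=
  (hT.2 X hX Y hY).imp_right fun h ↦
    h.resolve_right (not_not.2 ((hT.1 X hX).union (hT.1 Y hY) hXY))

lemma IsTubing.treeLE_total_of_treeLE {x y z : Fin n} (hT : IsTubing G T)
    (hy : treeLE T x y) (hz : treeLE T x z) : treeLE T y z ∨ treeLE T z y := by
  by_contra! h
  obtain ⟨X, hX, hzX, hyX⟩ := not_treeLE_iff.1 h.1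
  obtain ⟨Y, hY, hyY, hzY⟩ := not_treeLE_iff.1 h.2
  have hxXY : x ∈ X ∩ Y := mem_inter.2 ⟨treeLE_iff.1 hz X hX hzX, treeLE_iff.1 hy Y hY hyY⟩
  rcases hT.subset_or_subset hX hY ⟨x, hxXY⟩ with hXY | hYX
  · exact hzY (hXY hzX)
  · exact hyX (hYX hyY)

lemma TreeCovBy.eq_of_treeLE {x y z : Fin n} (hy : TreeCovBy T x y) (hz : TreeCovBy T x z)
    (hyz : treeLE T y z) : y = z :=
  (hz.2.2 y hy.1 hyz).resolve_left hy.2.1.symm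

end GTree

theorem gtree_unique_cover_general (n : ℕ) (G : SimpleGraph (Fin n))
    (T : Finset (Finset (Fin n))) (hT : IsMaxTubing G T) :
    ∀ x y z : Fin n, TreeCovBy T x y → TreeCovBy T x z → y = z := by
  intro x y z hy hz
  rcases hT.1.treeLE_total_of_treeLE hy.1 hz.1 with hyz | hzy
  · exact hy.eq_of_treeLE hz hyz
  · exact (hz.eq_of_treeLE hy hzy).symm

/-- In the G-tree order of a maximal tubing of a connected graph, every element has at
most one cover; hence the Hasse diagram is a rooted tree. -/
theorem gtree_unique_cover (n : ℕ) (G : SimpleGraph (Fin n)) (hG : G.Connected)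
    (T : Finset (Finset (Fin n))) (hT : IsMaxTubing G T) :
    ∀ x y z : Fin n, TreeCovBy T x y → TreeCovBy T x z → y = z :=
  gtree_unique_cover_general n G T hT
end

section
/- For maximal tubings X and Y of the path graph P_n, the following are equivalent: (1) X ≤ Y in MTub(P_n); (2) inv(X) ⊆ inv(Y); (3) inv(X) ⊆ inv(Y) ∪ inc(Y); (4) inv(X) ∪ inc(X) ⊆ inv(Y) ∪ inc(Y); (5) coinv(X) ⊇ coinv(Y). -/
open Finset

/-!
Tubes of the path are the nonempty intervals, so a maximal tubing `T` is a binary search tree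
in which the subtree of `x` is the interval `tubingDown T x`, and a flip is a rotation.

If a flip `T → J` exchanges the tube of `x` for the tube of `y`, with `x < y`, then the new tube
`tubingDown J y` lies inside `tubingDown T y` and contains its whole branch above `y` (that
branch is a tube of `T` different from the tube of `x`, hence a tube of `J`, and it touches
`y`). So if `j ≤_T i` with `i < j` and `i` in the new tube, then `j` lies in it as well: flips
only add inversions.

Conversely, if `inv T ⊊ inv Y`, a pair of `inv Y \ inv T` at minimal distance produces an edge
from `b` down to its left child `c` in the tree of `T` with `(c, b) ∈ inv Y`. Rotating at this
edge adds only inversions `(c, w)` with `w ≤_T b`, all of which lie in `inv Y`, so induction on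
the number of inversions gives `T ≤ Y`.

The other conditions are handled by the fact that incomparable `i < j` have a common ancestor
strictly between them, and that `inv ∪ inc` is the complement of `coinv` among pairs `i < j`.
-/

variable {n : ℕ}

theorem pathGraph_adj {a b : Fin n} :
    (pathGraph n).Adj a b ↔ (a : ℕ) + 1 = b ∨ (b : ℕ) + 1 = a := by
  rw [pathGraph, SimpleGraph.fromRel_adj]
  exact ⟨And.right, fun h => ⟨by rintro rfl; omega, h⟩⟩

theorem reachable_induce_pathGraph {s : Set (Fin n)} (hs : s.OrdConnected) {u v : s}
    (huv : u ≤ v) : ((pathGraph n).induce s).Reachable u v := by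
  obtain ⟨k, hk⟩ := Nat.exists_eq_add_of_le (show ((u : Fin n) : ℕ) ≤ (v : Fin n) from huv)
  induction k generalizing v with
  | zero => exact Subtype.ext (Fin.ext hk.symm) ▸ .refl _
  | succ k ih =>
    let w : Fin n := ⟨(u : Fin n) + k, by omega⟩
    have hw : w ∈ s :=
      hs.out u.2 v.2 ⟨Fin.le_def.2 (by simp [w]), Fin.le_def.2 (by simp [w]; omega)⟩
    refine (ih (v := ⟨w, hw⟩) (Fin.le_def.2 (by simp [w])) rfl).trans
      (SimpleGraph.Adj.reachable ?_)
    exact pathGraph_adj.2 (Or.inl (by simp [w]; omega))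

theorem ordConnected_of_preconnected_induce {s : Set (Fin n)}
    (h : ((pathGraph n).induce s).Preconnected) : s.OrdConnected := by
  refine ⟨fun a ha b hb c hc => ?_⟩
  by_contra hcs
  obtain ⟨p⟩ := h ⟨a, ha⟩ ⟨b, hb⟩
  obtain ⟨d, -, hd₁, hd₂⟩ := p.exists_boundary_dart {x | (x : Fin n) < c}
    (lt_of_le_of_ne hc.1 fun h => hcs (h ▸ ha)) (not_lt.2 hc.2)
  have hadj := pathGraph_adj.1 (SimpleGraph.induce_adj.1 d.adj)
  have h₁ : (d.toProd.1 : Fin n) < c := hd₁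
  have h₂ : c ≤ (d.toProd.2 : Fin n) := not_lt.1 hd₂
  have : (d.toProd.2 : Fin n) = c := by
    rw [Fin.lt_def] at h₁; rw [Fin.le_def] at h₂; ext; omega
  exact hcs (this ▸ d.toProd.2.2)

theorem isTube_pathGraph_iff {X : Finset (Fin n)} :
    IsTube (pathGraph n) X ↔ X.Nonempty ∧ (X : Set (Fin n)).OrdConnected := by
  refine and_congr_right fun hX =>
    ⟨fun h => ordConnected_of_preconnected_induce h.preconnected, fun h => ?_⟩
  have : Nonempty (X : Set (Fin n)) := hX.coe_sort
  refine (SimpleGraph.connected_iff _).2 ⟨fun u v => ?_, this⟩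
  rcases le_total u v with huv | hvu
  exacts [reachable_induce_pathGraph h huv, (reachable_induce_pathGraph h hvu).symm]

theorem Set.OrdConnected.forall_lt_or_forall_gt {α : Type*} [LinearOrder α] {s : Set α}
    (hs : s.OrdConnected) {t : α} (ht : t ∉ s) :
    (∀ x ∈ s, x < t) ∨ ∀ x ∈ s, t < x := by
  by_contra! h
  obtain ⟨⟨u, hu, htu⟩, v, hv, hvt⟩ := h
  exact ht (hs.out hv hu ⟨hvt, htu⟩)

theorem TubeCompatible.symm {G : SimpleGraph (Fin n)} {A B : Finset (Fin n)}
    (h : TubeCompatible G A B) : TubeCompatible G B A := by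
  rcases h with h | h | h
  exacts [Or.inr (Or.inl h), Or.inl h, Or.inr (Or.inr (union_comm A B ▸ h))]

theorem tubeCompatible_of_forall_lt {A B : Finset (Fin n)} {g : Fin n}
    (hA : ∀ a ∈ A, a < g) (hB : ∀ b ∈ B, g < b) : TubeCompatible (pathGraph n) A B := by
  rcases A.eq_empty_or_nonempty with rfl | ⟨a, ha⟩
  · exact Or.inl (empty_subset B)
  rcases B.eq_empty_or_nonempty with rfl | ⟨b, hb⟩
  · exact Or.inr (Or.inl (empty_subset _))
  refine Or.inr (Or.inr fun h => ?_)
  have hg : g ∈ A ∪ B := (isTube_pathGraph_iff.1 h).2.out (mem_union_left B ha)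
    (mem_union_right A hb) ⟨(hA a ha).le, (hB b hb).le⟩
  rcases mem_union.1 hg with hg | hg
  exacts [lt_irrefl g (hA g hg), lt_irrefl g (hB g hg)]

section TubingDown

variable {T : Finset (Finset (Fin n))} {x y z : Fin n}

theorem mem_tubingDown : y ∈ tubingDown T x ↔ ∀ A ∈ T, x ∈ A → y ∈ A := by
  simp [tubingDown]

theorem mem_tubingDown_self (T : Finset (Finset (Fin n))) (x : Fin n) : x ∈ tubingDown T x :=
  mem_tubingDown.2 fun _ _ h => h

theorem tubingDown_subset {A : Finset (Fin n)} (hA : A ∈ T) (hx : x ∈ A) :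
    tubingDown T x ⊆ A :=
  fun _ hy => mem_tubingDown.1 hy A hA hx

theorem tubingDown_eq_of_forall_subset {D : Finset (Fin n)} (hD : D ∈ T) (hx : x ∈ D)
    (h : ∀ A ∈ T, x ∈ A → D ⊆ A) : tubingDown T x = D :=
  (tubingDown_subset hD hx).antisymm fun _ hy => mem_tubingDown.2 fun A hA hxA => h A hA hxA hy

theorem treeLE_refl (T : Finset (Finset (Fin n))) (x : Fin n) : treeLE T x x :=
  mem_tubingDown_self T x

theorem treeLE_trans (hxy : treeLE T x y) (hyz : treeLE T y z) : treeLE T x z :=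
  mem_tubingDown.2 fun A hA hz => mem_tubingDown.1 hxy A hA (mem_tubingDown.1 hyz A hA hz)

end TubingDown

namespace IsTubing

variable {T : Finset (Finset (Fin n))} {A B : Finset (Fin n)} (hT : IsTubing (pathGraph n) T)
include hT

theorem ordConnected (hA : A ∈ T) : (A : Set (Fin n)).OrdConnected :=
  (isTube_pathGraph_iff.1 (hT.1 A hA)).2

theorem subset_or_subset_or_separated (hA : A ∈ T) (hB : B ∈ T) :
    A ⊆ B ∨ B ⊆ A ∨ ∃ g, ((∀ a ∈ A, a < g) ∧ ∀ b ∈ B, g < b) ∨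
      ((∀ b ∈ B, b < g) ∧ ∀ a ∈ A, g < a) := by
  refine (hT.2 A hA B hB).imp_right (Or.imp_right fun h => ?_)
  have hne : (A ∪ B).Nonempty := (hT.1 A hA).1.mono subset_union_left
  obtain ⟨u, hu, v, hv, g, ⟨hug, hgv⟩, hg⟩ :
      ∃ u ∈ A ∪ B, ∃ v ∈ A ∪ B, ∃ g ∈ Set.Icc u v, g ∉ A ∪ B := by
    by_contra! hcon
    exact h (isTube_pathGraph_iff.2 ⟨hne, ⟨fun u hu v hv g hg => hcon u hu v hv g hg⟩⟩)
  rw [mem_union, not_or] at hg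
  refine ⟨g, ?_⟩
  rcases (hT.ordConnected hA).forall_lt_or_forall_gt hg.1 with hAg | hgA <;>
  rcases (hT.ordConnected hB).forall_lt_or_forall_gt hg.2 with hBg | hgB
  · rcases mem_union.1 hv with hv | hv
    exacts [absurd hgv (not_le.2 (hAg v hv)), absurd hgv (not_le.2 (hBg v hv))]
  · exact Or.inl ⟨hAg, hgB⟩
  · exact Or.inr ⟨hBg, hgA⟩
  · rcases mem_union.1 hu with hu | hu
    exacts [absurd hug (not_le.2 (hgA u hu)), absurd hug (not_le.2 (hgB u hu))]

theorem subset_or_subset_of_le (hA : A ∈ T) (hB : B ∈ T) {a b : Fin n} (ha : a ∈ A)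
    (hb : b ∈ B) (hab : a ≤ b) (hgap : ∀ c, a < c → c < b → c ∈ A ∨ c ∈ B) :
    A ⊆ B ∨ B ⊆ A := by
  rcases hT.subset_or_subset_or_separated hA hB with
    h | h | ⟨g, ⟨hAg, hgB⟩ | ⟨hBg, hgA⟩⟩
  · exact Or.inl h
  · exact Or.inr h
  · rcases hgap g (hAg a ha) (hgB b hb) with hg | hg
    exacts [(lt_irrefl g (hAg g hg)).elim, (lt_irrefl g (hgB g hg)).elim]
  · exact absurd hab (not_le.2 ((hBg b hb).trans (hgA a ha)))

theorem subset_or_subset_of_mem (hA : A ∈ T) (hB : B ∈ T) {x : Fin n} (hxA : x ∈ A)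
    (hxB : x ∈ B) : A ⊆ B ∨ B ⊆ A :=
  hT.subset_or_subset_of_le hA hB hxA hxB le_rfl fun _ h₁ h₂ => (lt_asymm h₁ h₂).elim

theorem tubeCompatible_of_subset {C : Finset (Fin n)} (hA : A ∈ T) (hB : B ∈ T) (hCB : C ⊆ B)
    (h : A ⊆ B → TubeCompatible (pathGraph n) C A) : TubeCompatible (pathGraph n) C A := by
  rcases hT.subset_or_subset_or_separated hA hB with
    hAB | hBA | ⟨g, ⟨hAg, hgB⟩ | ⟨hBg, hgA⟩⟩
  · exact h hAB
  · exact Or.inl (hCB.trans hBA)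
  · exact (tubeCompatible_of_forall_lt hAg fun c hc => hgB c (hCB hc)).symm
  · exact tubeCompatible_of_forall_lt (fun c hc => hBg c (hCB hc)) hgA

/- Otherwise every vertex of `B` lies in a proper subtube; the maximal one containing `min B`
and the maximal one containing the least vertex outside it would be neither nested nor
separated. -/
theorem exists_tubingDown_eq (hB : B ∈ T) : ∃ t, tubingDown T t = B := by
  by_contra! hnot
  have hsub : ∀ t ∈ B, ∃ A ∈ T, t ∈ A ∧ A ⊂ B := by
    intro t ht
    by_contra! h
    refine hnot t (tubingDown_eq_of_forall_subset hB ht fun A hA htA => ?_)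
    rcases hT.subset_or_subset_of_mem hB hA ht htA with hBA | hAB
    · exact hBA
    · by_contra hBA
      exact h A hA htA ⟨hAB, hBA⟩
  have hmax : ∀ t ∈ B, ∃ M, Maximal (· ∈ T.filter fun A => t ∈ A ∧ A ⊂ B) M :=
    fun t ht => let ⟨A, hA, htA, hAB⟩ := hsub t ht
    Finset.exists_maximal ⟨A, mem_filter.2 ⟨hA, htA, hAB⟩⟩
  have hBne := (hT.1 B hB).1
  have haB := B.min'_mem hBne
  obtain ⟨M₁, hM₁⟩ := hmax _ haB
  obtain ⟨hM₁T, haM₁, hM₁B⟩ := mem_filter.1 hM₁.1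
  have hne : (B \ M₁).Nonempty := sdiff_nonempty.2 hM₁B.2
  obtain ⟨hsB, hsM₁⟩ := mem_sdiff.1 ((B \ M₁).min'_mem hne)
  obtain ⟨M₂, hM₂⟩ := hmax _ hsB
  obtain ⟨hM₂T, hsM₂, hM₂B⟩ := mem_filter.1 hM₂.1
  have hgap : ∀ c, B.min' hBne < c → c < (B \ M₁).min' hne → c ∈ M₁ ∨ c ∈ M₂ := by
    intro c hac hcs
    by_contra! hc
    have hcB := (hT.ordConnected hB).out haB hsB ⟨hac.le, hcs.le⟩
    exact not_le.2 hcs ((B \ M₁).min'_le c (mem_sdiff.2 ⟨hcB, hc.1⟩))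
  rcases hT.subset_or_subset_of_le hM₁T hM₂T haM₁ hsM₂ (B.min'_le _ hsB) hgap with h | h
  · exact hsM₁ (hM₁.2 (mem_filter.2 ⟨hM₂T, h haM₁, hM₂B⟩) h hsM₂)
  · exact hsM₁ (h hsM₂)

theorem card_le : T.card ≤ n := by
  have hsub : T ⊆ univ.image (tubingDown T) := fun B hB =>
    let ⟨t, ht⟩ := hT.exists_tubingDown_eq hB
    mem_image.2 ⟨t, mem_univ t, ht⟩
  simpa using (card_le_card hsub).trans card_image_le

end IsTubing

theorem IsTubing.isMaxTubing_of_card_eq {T : Finset (Finset (Fin n))}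
    (hT : IsTubing (pathGraph n) T) (h : T.card = n) : IsMaxTubing (pathGraph n) T :=
  ⟨hT, fun _ hT' hTT' => (eq_of_subset_of_card_le hTT' (hT'.card_le.trans h.ge)).symm⟩

theorem IsMaxTubing.mem_of_forall_tubeCompatible {G : SimpleGraph (Fin n)}
    {T : Finset (Finset (Fin n))} (hT : IsMaxTubing G T) {C : Finset (Fin n)} (hC : IsTube G C)
    (h : ∀ A ∈ T, TubeCompatible G C A) : C ∈ T := by
  have hins : IsTubing G (insert C T) := by
    refine ⟨(forall_mem_insert _ _ _).2 ⟨hC, hT.1.1⟩,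
      (forall_mem_insert _ _ _).2 ⟨?_, ?_⟩⟩
    · exact (forall_mem_insert _ _ _).2 ⟨Or.inl subset_rfl, h⟩
    · exact fun A hA => (forall_mem_insert _ _ _).2 ⟨(h A hA).symm, hT.1.2 A hA⟩
  rw [← hT.2 _ hins (subset_insert C T)]
  exact mem_insert_self C T

namespace IsMaxTubing

variable {T : Finset (Finset (Fin n))} (hT : IsMaxTubing (pathGraph n) T)
include hT

theorem univ_mem (x : Fin n) : univ ∈ T :=
  hT.mem_of_forall_tubeCompatible
    (isTube_pathGraph_iff.2 ⟨⟨x, mem_univ x⟩, by simpa using Set.ordConnected_univ⟩)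
    fun A _ => Or.inr (Or.inl (subset_univ A))

theorem tubingDown_mem (x : Fin n) : tubingDown T x ∈ T := by
  obtain ⟨M, hM⟩ := exists_minimal (s := T.filter (x ∈ ·))
    ⟨univ, mem_filter.2 ⟨hT.univ_mem x, mem_univ x⟩⟩
  obtain ⟨hMT, hxM⟩ := mem_filter.1 hM.1
  rw [tubingDown_eq_of_forall_subset hMT hxM fun A hA hxA => ?_]
  · exact hMT
  rcases hT.1.subset_or_subset_of_mem hMT hA hxM hxA with h | h
  exacts [h, hM.2 (mem_filter.2 ⟨hA, hxA⟩) h]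

theorem filter_lt_mem (t : Fin n) (hne : ((tubingDown T t).filter (· < t)).Nonempty) :
    (tubingDown T t).filter (· < t) ∈ T := by
  have hB := hT.tubingDown_mem t
  have hC : ((tubingDown T t).filter (· < t) : Set (Fin n)).OrdConnected := by
    rw [coe_filter]
    exact (hT.1.ordConnected hB).inter Set.ordConnected_Iio
  refine hT.mem_of_forall_tubeCompatible (isTube_pathGraph_iff.2 ⟨hne, hC⟩) fun A hA =>
    hT.1.tubeCompatible_of_subset hA hB (filter_subset _ _) fun hAB => ?_
  by_cases htA : t ∈ A
  · exact Or.inl ((filter_subset _ _).trans (tubingDown_subset hA htA))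
  rcases (hT.1.ordConnected hA).forall_lt_or_forall_gt htA with hAt | htA'
  · exact Or.inr (Or.inl fun a ha => mem_filter.2 ⟨hAB ha, hAt a ha⟩)
  · exact tubeCompatible_of_forall_lt (fun c hc => (mem_filter.1 hc).2) htA'

theorem filter_gt_mem (t : Fin n) (hne : ((tubingDown T t).filter (t < ·)).Nonempty) :
    (tubingDown T t).filter (t < ·) ∈ T := by
  have hB := hT.tubingDown_mem t
  have hC : ((tubingDown T t).filter (t < ·) : Set (Fin n)).OrdConnected := by
    rw [coe_filter]
    exact (hT.1.ordConnected hB).inter Set.ordConnected_Ioi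
  refine hT.mem_of_forall_tubeCompatible (isTube_pathGraph_iff.2 ⟨hne, hC⟩) fun A hA =>
    hT.1.tubeCompatible_of_subset hA hB (filter_subset _ _) fun hAB => ?_
  by_cases htA : t ∈ A
  · exact Or.inl ((filter_subset _ _).trans (tubingDown_subset hA htA))
  rcases (hT.1.ordConnected hA).forall_lt_or_forall_gt htA with hAt | htA'
  · exact (tubeCompatible_of_forall_lt hAt fun c hc => (mem_filter.1 hc).2).symm
  · exact Or.inr (Or.inl fun a ha => mem_filter.2 ⟨hAB ha, htA' a ha⟩)

theorem tubingDown_injective : Function.Injective (tubingDown T) := by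
  intro s t hst
  by_contra hne
  wlog hlt : s < t generalizing s t
  · exact this hst.symm (Ne.symm hne) (lt_of_le_of_ne (not_lt.1 hlt) (Ne.symm hne))
  have hs : s ∈ (tubingDown T t).filter (· < t) :=
    mem_filter.2 ⟨hst ▸ mem_tubingDown_self T s, hlt⟩
  have ht : t ∈ tubingDown T s := hst ▸ mem_tubingDown_self T t
  exact lt_irrefl t (mem_filter.1 (tubingDown_subset (hT.filter_lt_mem t ⟨s, hs⟩) hs ht)).2

theorem treeLE_antisymm {x y : Fin n} (hxy : treeLE T x y) (hyx : treeLE T y x) : x = y :=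
  hT.tubingDown_injective ((tubingDown_subset (hT.tubingDown_mem y) hxy).antisymm
    (tubingDown_subset (hT.tubingDown_mem x) hyx))

theorem treeLE_of_mem_uIcc {u v w : Fin n} (huv : treeLE T u v) (hw : w ∈ Set.uIcc u v) :
    treeLE T w v :=
  (hT.1.ordConnected (hT.tubingDown_mem v)).uIcc_subset huv (mem_tubingDown_self T v) hw

theorem exists_between_of_not_treeLE {i j : Fin n} (hij : i < j) (h₁ : ¬ treeLE T i j)
    (h₂ : ¬ treeLE T j i) : ∃ t, i < t ∧ t < j ∧ treeLE T i t ∧ treeLE T j t := by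
  obtain ⟨B, hB⟩ := exists_minimal (s := T.filter fun A => i ∈ A ∧ j ∈ A)
    ⟨univ, mem_filter.2 ⟨hT.univ_mem i, mem_univ i, mem_univ j⟩⟩
  obtain ⟨hBT, hiB, hjB⟩ := mem_filter.1 hB.1
  have hBmin : ∀ A ∈ T, i ∈ A → j ∈ A → B ⊆ A := fun A hA hiA hjA =>
    (hT.1.subset_or_subset_of_mem hBT hA hiB hiA).elim id
      (hB.2 (mem_filter.2 ⟨hA, hiA, hjA⟩))
  obtain ⟨t, rfl⟩ := hT.1.exists_tubingDown_eq hBT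
  refine ⟨t, ?_, ?_, hiB, hjB⟩
  · by_contra! hti
    rcases hti.lt_or_eq with hti | rfl
    · have hi : i ∈ (tubingDown T t).filter (t < ·) := mem_filter.2 ⟨hiB, hti⟩
      have := hBmin _ (hT.filter_gt_mem t ⟨i, hi⟩) hi (mem_filter.2 ⟨hjB, hti.trans hij⟩)
      exact lt_irrefl t (mem_filter.1 (this (mem_tubingDown_self T t))).2
    · exact h₂ hjB
  · by_contra! hjt
    rcases hjt.lt_or_eq with hjt | rfl
    · have hj : j ∈ (tubingDown T t).filter (· < t) := mem_filter.2 ⟨hjB, hjt⟩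
      have := hBmin _ (hT.filter_lt_mem t ⟨j, hj⟩) (mem_filter.2 ⟨hiB, hij.trans hjt⟩) hj
      exact lt_irrefl t (mem_filter.1 (this (mem_tubingDown_self T t))).2
    · exact h₁ hiB

theorem image_tubingDown : univ.image (tubingDown T) = T := by
  ext B
  simp only [mem_image, mem_univ, true_and]
  exact ⟨fun ⟨t, ht⟩ => ht ▸ hT.tubingDown_mem t, hT.1.exists_tubingDown_eq⟩

theorem card_eq : T.card = n := by
  rw [← hT.image_tubingDown, card_image_of_injective _ hT.tubingDown_injective, card_univ,
    Fintype.card_fin]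

theorem eq_of_treeLE_iff {U : Finset (Finset (Fin n))} (hU : IsMaxTubing (pathGraph n) U)
    (h : ∀ u v, treeLE T u v ↔ treeLE U u v) : T = U := by
  have : tubingDown T = tubingDown U := funext fun v => Finset.ext fun u => h u v
  rw [← hT.image_tubingDown, ← hU.image_tubingDown, this]

end IsMaxTubing

section InversionSets

variable {S U : Finset (Finset (Fin n))}

theorem mem_invSet {T : Finset (Finset (Fin n))} {i j : Fin n} :
    (i, j) ∈ invSet T ↔ i < j ∧ treeLE T j i :=
  Iff.rfl

theorem mem_coinvSet {T : Finset (Finset (Fin n))} {i j : Fin n} :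
    (i, j) ∈ coinvSet T ↔ i < j ∧ treeLE T i j :=
  Iff.rfl

theorem coinvSet_subset_lt (T : Finset (Finset (Fin n))) :
    coinvSet T ⊆ {p : Fin n × Fin n | p.1 < p.2} :=
  fun _ hp => hp.1

theorem IsMaxTubing.invSet_union_incSet {T : Finset (Finset (Fin n))}
    (hT : IsMaxTubing (pathGraph n) T) :
    invSet T ∪ incSet T = {p : Fin n × Fin n | p.1 < p.2} \ coinvSet T := by
  ext ⟨i, j⟩
  simp only [invSet, incSet, coinvSet, Set.mem_union, Set.mem_sdiff, Set.mem_ofPred_eq, not_and]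
  constructor
  · rintro (⟨hij, hji⟩ | ⟨hij, hnij, -⟩)
    · exact ⟨hij, fun _ hle => hij.ne (hT.treeLE_antisymm hle hji)⟩
    · exact ⟨hij, fun _ => hnij⟩
  · rintro ⟨hij, h⟩
    by_cases hji : treeLE T j i
    · exact Or.inl ⟨hij, hji⟩
    · exact Or.inr ⟨hij, h hij, hji⟩

theorem IsMaxTubing.coinvSet_subset_of_invSet_subset_union (hS : IsMaxTubing (pathGraph n) S)
    (hU : IsMaxTubing (pathGraph n) U) (h : invSet S ⊆ invSet U ∪ incSet U) :
    coinvSet U ⊆ coinvSet S := by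
  rw [hU.invSet_union_incSet] at h
  have hdisj : ∀ {i j}, (i, j) ∈ coinvSet U → (i, j) ∉ invSet S := fun hU hS => (h hS).2 hU
  rintro ⟨i, j⟩ ⟨hij, hUij⟩
  refine ⟨hij, ?_⟩
  by_contra hSij
  by_cases hSji : treeLE S j i
  · exact hdisj (mem_coinvSet.2 ⟨hij, hUij⟩) (mem_invSet.2 ⟨hij, hSji⟩)
  obtain ⟨t, hit, htj, -, hSjt⟩ := hS.exists_between_of_not_treeLE hij hSij hSji
  have hUtj : treeLE U t j := hU.treeLE_of_mem_uIcc hUij (Set.mem_uIcc_of_le hit.le htj.le)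
  exact hdisj (mem_coinvSet.2 ⟨htj, hUtj⟩) (mem_invSet.2 ⟨htj, hSjt⟩)

theorem IsMaxTubing.invSet_subset_of_coinvSet_subset (hS : IsMaxTubing (pathGraph n) S)
    (hU : IsMaxTubing (pathGraph n) U) (h : coinvSet U ⊆ coinvSet S) :
    invSet S ⊆ invSet U := by
  rintro ⟨i, j⟩ ⟨hij, hSji⟩
  refine ⟨hij, ?_⟩
  by_contra hUji
  by_cases hUij : treeLE U i j
  · exact hij.ne (hS.treeLE_antisymm (h (mem_coinvSet.2 ⟨hij, hUij⟩)).2 hSji)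
  obtain ⟨t, hit, htj, hUit, -⟩ := hU.exists_between_of_not_treeLE hij hUij hUji
  have hSti : treeLE S t i := hS.treeLE_of_mem_uIcc hSji (Set.mem_uIcc_of_ge hit.le htj.le)
  exact hit.ne (hS.treeLE_antisymm (h (mem_coinvSet.2 ⟨hit, hUit⟩)).2 hSti)

theorem IsMaxTubing.eq_of_invSet_eq (hS : IsMaxTubing (pathGraph n) S)
    (hU : IsMaxTubing (pathGraph n) U) (h : invSet S = invSet U) : S = U := by
  have hco : coinvSet S = coinvSet U :=
    (hU.coinvSet_subset_of_invSet_subset_union hS (h ▸ Set.subset_union_left)).antisymm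
      (hS.coinvSet_subset_of_invSet_subset_union hU (h ▸ Set.subset_union_left))
  refine hS.eq_of_treeLE_iff hU fun u v => ?_
  rcases lt_trichotomy u v with huv | rfl | hvu
  · exact and_congr_right_iff.1 (Set.ext_iff.1 hco (u, v)) huv
  · exact iff_of_true (treeLE_refl S u) (treeLE_refl U u)
  · exact and_congr_right_iff.1 (Set.ext_iff.1 h (v, u)) hvu

theorem treeLE_of_invSet_subset {T Y : Finset (Finset (Fin n))} (h : invSet T ⊆ invSet Y)
    {u w : Fin n} (huw : u ≤ w) (hwu : treeLE T w u) : treeLE Y w u := by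
  rcases huw.eq_or_lt with rfl | hlt
  exacts [treeLE_refl Y u, (h (mem_invSet.2 ⟨hlt, hwu⟩)).2]

end InversionSets

section Flips

variable {T J : Finset (Finset (Fin n))}

theorem FlipCover.invSet_subset (h : FlipCover (pathGraph n) T J) : invSet T ⊆ invSet J := by
  obtain ⟨hT, hJ, -, -, -, hYJ, -, herase, x, y, rfl, rfl, hxy⟩ := h
  have hmemJ : ∀ A ∈ T, A ≠ tubingDown T x → A ∈ J := fun A hA hAX =>
    mem_of_mem_erase (herase ▸ mem_erase.2 ⟨hAX, hA⟩)
  have hQJ : tubingDown T y ∈ J :=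
    hmemJ _ (hT.tubingDown_mem y) fun h => hxy.ne' (hT.tubingDown_injective h)
  have hYQ : tubingDown J y ⊆ tubingDown T y := tubingDown_subset hQJ (mem_tubingDown_self T y)
  have hRY : ∀ j ∈ tubingDown T y, y < j → j ∈ tubingDown J y := by
    intro j hjQ hyj
    have hjR : j ∈ (tubingDown T y).filter (y < ·) := mem_filter.2 ⟨hjQ, hyj⟩
    have hRJ := hmemJ _ (hT.filter_gt_mem y ⟨j, hjR⟩) fun h =>
      hxy.not_gt (mem_filter.1 (h ▸ mem_tubingDown_self T x)).2
    have hgap : ∀ c, y < c → c < j →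
        c ∈ tubingDown J y ∨ c ∈ (tubingDown T y).filter (y < ·) :=
      fun c hyc hcj => Or.inr (mem_filter.2
        ⟨(hT.1.ordConnected (hT.tubingDown_mem y)).out (mem_tubingDown_self T y) hjQ
          ⟨hyc.le, hcj.le⟩, hyc⟩)
    rcases hJ.1.subset_or_subset_of_le hYJ hRJ (mem_tubingDown_self J y) hjR hyj.le hgap with
      h | h
    · exact (lt_irrefl y (mem_filter.1 (h (mem_tubingDown_self J y))).2).elim
    · exact h hjR
  rintro ⟨i, j⟩ ⟨hij, hji⟩
  refine ⟨hij, mem_tubingDown.2 fun A hA hiA => ?_⟩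
  by_cases hAY : A = tubingDown J y
  · subst hAY
    rcases le_or_gt j y with hjy | hyj
    · exact (hJ.1.ordConnected hYJ).out hiA (mem_tubingDown_self J y) ⟨hij.le, hjy⟩
    · exact hRY j (treeLE_trans hji (hYQ hiA)) hyj
  · exact mem_tubingDown.1 hji A (mem_of_mem_erase (herase ▸ mem_erase.2 ⟨hAY, hA⟩)) hiA

theorem FlipCover.invSet_ssubset (h : FlipCover (pathGraph n) T J) : invSet T ⊂ invSet J := by
  refine h.invSet_subset.ssubset_of_ne fun hTJ => ?_
  obtain ⟨hT, hJ, X, Y, hXT, -, hXY, herase, -⟩ := h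
  have hXJ : X ∈ J := hT.eq_of_invSet_eq hJ hTJ ▸ hXT
  exact (mem_erase.1 (herase ▸ mem_erase.2 ⟨hXY, hXJ⟩)).1 rfl

theorem MTubLE.invSet_subset (h : MTubLE (pathGraph n) T J) : invSet T ⊆ invSet J := by
  induction h with
  | refl => exact subset_rfl
  | tail _ hflip ih => exact ih.trans hflip.invSet_subset

end Flips

/-- The rotation of the G-tree of `T` at the edge from `b` down to its left child `c`, that is,
when `tubingDown T c` is the part of `tubingDown T b` below `b`. -/
def treeRotation (T : Finset (Finset (Fin n))) (b c : Fin n) : Finset (Finset (Fin n)) :=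
  insert ((tubingDown T b).filter (c < ·)) (T.erase (tubingDown T c))

namespace IsMaxTubing

section TreeRotation

variable {T : Finset (Finset (Fin n))} (hT : IsMaxTubing (pathGraph n) T) {b c : Fin n}
  (hc : tubingDown T c = (tubingDown T b).filter (· < b))
include hT hc

omit hT in
theorem lt_of_tubingDown_eq_filter_lt : c < b := by
  have hcL : c ∈ (tubingDown T b).filter (· < b) := hc ▸ mem_tubingDown_self T c
  exact (mem_filter.1 hcL).2

theorem filter_gt_notMem : (tubingDown T b).filter (c < ·) ∉ T := by
  have hcb := lt_of_tubingDown_eq_filter_lt hc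
  intro hR
  have hbR : b ∈ (tubingDown T b).filter (c < ·) :=
    mem_filter.2 ⟨mem_tubingDown_self T b, hcb⟩
  have hgap : ∀ d, c < d → d < b →
      d ∈ tubingDown T c ∨ d ∈ (tubingDown T b).filter (c < ·) := fun d hcd hdb =>
    Or.inr (mem_filter.2 ⟨(hT.1.ordConnected (hT.tubingDown_mem b)).out
      (filter_subset _ _ (hc ▸ mem_tubingDown_self T c)) (mem_tubingDown_self T b)
      ⟨hcd.le, hdb.le⟩, hcd⟩)
  rcases hT.1.subset_or_subset_of_le (hT.tubingDown_mem c) hR (mem_tubingDown_self T c) hbR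
    hcb.le hgap with h | h
  · exact lt_irrefl c (mem_filter.1 (h (mem_tubingDown_self T c))).2
  · have hbL : b ∈ (tubingDown T b).filter (· < b) := hc ▸ h hbR
    exact lt_irrefl b (mem_filter.1 hbL).2

theorem tubeCompatible_filter_gt {A : Finset (Fin n)} (hA : A ∈ T) (hAc : A ≠ tubingDown T c) :
    TubeCompatible (pathGraph n) ((tubingDown T b).filter (c < ·)) A := by
  have hcb := lt_of_tubingDown_eq_filter_lt hc
  refine hT.1.tubeCompatible_of_subset hA (hT.tubingDown_mem b) (filter_subset _ _)
    fun hAB => ?_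
  by_cases hbA : b ∈ A
  · exact Or.inl ((filter_subset _ _).trans (tubingDown_subset hA hbA))
  rcases (hT.1.ordConnected hA).forall_lt_or_forall_gt hbA with hAb | hbA'
  · by_cases hcA : c ∈ A
    · refine absurd ((tubingDown_subset hA hcA).antisymm ?_) (Ne.symm hAc)
      exact hc ▸ fun a ha => mem_filter.2 ⟨hAB ha, hAb a ha⟩
    rcases (hT.1.ordConnected hA).forall_lt_or_forall_gt hcA with hAc' | hcA'
    · exact (tubeCompatible_of_forall_lt hAc' fun r hr => (mem_filter.1 hr).2).symm
    · exact Or.inr (Or.inl fun a ha => mem_filter.2 ⟨hAB ha, hcA' a ha⟩)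
  · exact Or.inr (Or.inl fun a ha => mem_filter.2 ⟨hAB ha, hcb.trans (hbA' a ha)⟩)

theorem isMaxTubing_treeRotation : IsMaxTubing (pathGraph n) (treeRotation T b c) := by
  have hcb := lt_of_tubingDown_eq_filter_lt hc
  have hR : IsTube (pathGraph n) ((tubingDown T b).filter (c < ·)) := by
    refine isTube_pathGraph_iff.2 ⟨⟨b, mem_filter.2 ⟨mem_tubingDown_self T b, hcb⟩⟩, ?_⟩
    rw [coe_filter]
    exact (hT.1.ordConnected (hT.tubingDown_mem b)).inter Set.ordConnected_Ioi
  have hcompat : ∀ A ∈ T.erase (tubingDown T c),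
      TubeCompatible (pathGraph n) ((tubingDown T b).filter (c < ·)) A := fun A hA =>
    hT.tubeCompatible_filter_gt hc (mem_of_mem_erase hA) (ne_of_mem_erase hA)
  refine IsTubing.isMaxTubing_of_card_eq ⟨?_, ?_⟩ ?_
  · exact (forall_mem_insert _ _ _).2 ⟨hR, fun A hA => hT.1.1 A (mem_of_mem_erase hA)⟩
  · intro A hA B hB
    rcases mem_insert.1 hA with rfl | hA <;> rcases mem_insert.1 hB with rfl | hB
    · exact Or.inl subset_rfl
    · exact hcompat B hB
    · exact (hcompat A hA).symm
    · exact hT.1.2 A (mem_of_mem_erase hA) B (mem_of_mem_erase hB)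
  · rw [treeRotation, card_insert_of_notMem fun h => hT.filter_gt_notMem hc (mem_of_mem_erase h),
      card_erase_of_mem (hT.tubingDown_mem c), hT.card_eq]
    have := c.pos
    omega

theorem flipCover_treeRotation : FlipCover (pathGraph n) T (treeRotation T b c) := by
  have hcb := lt_of_tubingDown_eq_filter_lt hc
  have hbR : b ∈ (tubingDown T b).filter (c < ·) :=
    mem_filter.2 ⟨mem_tubingDown_self T b, hcb⟩
  refine ⟨hT, hT.isMaxTubing_treeRotation hc, _, _, hT.tubingDown_mem c, mem_insert_self _ _,
    fun h => lt_irrefl c (mem_filter.1 (h ▸ mem_tubingDown_self T c)).2, ?_, c, b, rfl, ?_, hcb⟩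
  · exact (erase_insert fun h => hT.filter_gt_notMem hc (mem_of_mem_erase h)).symm
  · refine tubingDown_eq_of_forall_subset (mem_insert_self _ _) hbR fun A hA hbA => ?_
    rcases mem_insert.1 hA with rfl | hA
    · exact subset_rfl
    · exact (filter_subset _ _).trans (tubingDown_subset (mem_of_mem_erase hA) hbA)

theorem treeLE_of_treeLE_treeRotation {u w : Fin n} (h : treeLE (treeRotation T b c) w u) :
    treeLE T w u ∨ u = c ∧ treeLE T w b := by
  by_cases huc : u = c
  · subst huc
    have hbc : tubingDown T b ≠ tubingDown T u := fun h' => by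
      have hbL : b ∈ (tubingDown T b).filter (· < b) := hc ▸ h' ▸ mem_tubingDown_self T b
      exact lt_irrefl b (mem_filter.1 hbL).2
    refine Or.inr ⟨rfl, mem_tubingDown.1 h _ (mem_insert_of_mem (mem_erase.2
      ⟨hbc, hT.tubingDown_mem b⟩)) (filter_subset _ _ (hc ▸ mem_tubingDown_self T u))⟩
  · have hD : tubingDown T u ∈ treeRotation T b c := mem_insert_of_mem (mem_erase.2
      ⟨fun h' => huc (hT.tubingDown_injective h'), hT.tubingDown_mem u⟩)
    exact Or.inl (mem_tubingDown.1 h _ hD (mem_tubingDown_self T u))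

theorem invSet_treeRotation_subset {Y : Finset (Finset (Fin n))} (hmono : invSet T ⊆ invSet Y)
    (hcb : (c, b) ∈ invSet Y) : invSet (treeRotation T b c) ⊆ invSet Y := by
  intro ⟨u, w⟩ hp
  obtain ⟨huw, h⟩ := mem_invSet.1 hp
  rcases hT.treeLE_of_treeLE_treeRotation hc h with h' | ⟨rfl, hwb⟩
  · exact hmono (mem_invSet.2 ⟨huw, h'⟩)
  refine ⟨huw, ?_⟩
  rcases lt_or_ge w b with hwb' | hbw
  · have hwc : w ∈ tubingDown T u := hc ▸ mem_filter.2 ⟨hwb, hwb'⟩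
    exact treeLE_of_invSet_subset hmono huw.le hwc
  · exact treeLE_trans (treeLE_of_invSet_subset hmono hbw hwb) hcb.2

end TreeRotation

theorem exists_treeRotation_edge {T Y : Finset (Finset (Fin n))} (hT : IsMaxTubing (pathGraph n) T)
    (hY : IsMaxTubing (pathGraph n) Y) (hmono : invSet T ⊆ invSet Y)
    (hne : ¬ invSet Y ⊆ invSet T) :
    ∃ b c, tubingDown T c = (tubingDown T b).filter (· < b) ∧ (c, b) ∈ invSet Y := by
  obtain ⟨⟨a, b⟩, ⟨⟨hab, hYba⟩, hTba⟩, hmin⟩ :=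
    Set.exists_min_image (invSet Y \ invSet T) (fun p => (p.2 : ℕ) - p.1) (Set.toFinite _)
      (Set.not_subset.1 hne)
  have hbetween : ∀ t, a < t → t < b → ¬ treeLE T a t := by
    intro t hat htb hTat
    have hYta : treeLE Y t a := hY.treeLE_of_mem_uIcc hYba (Set.mem_uIcc_of_ge hat.le htb.le)
    have := hmin (a, t) ⟨⟨hat, hYta⟩, fun h => hat.ne (hT.treeLE_antisymm hTat h.2)⟩
    dsimp only at this
    omega
  have hTab : treeLE T a b := by
    by_contra h
    obtain ⟨t, hat, htb, hTat, -⟩ :=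
      hT.exists_between_of_not_treeLE hab h fun h' => hTba (mem_invSet.2 ⟨hab, h'⟩)
    exact hbetween t hat htb hTat
  have haL : a ∈ (tubingDown T b).filter (· < b) := mem_filter.2 ⟨hTab, hab⟩
  obtain ⟨c, hc⟩ := hT.1.exists_tubingDown_eq (hT.filter_lt_mem b ⟨a, haL⟩)
  have hac : a ∈ tubingDown T c := hc ▸ haL
  have hcb := lt_of_tubingDown_eq_filter_lt hc
  refine ⟨b, c, hc, hcb, ?_⟩
  rcases lt_trichotomy c a with hca | rfl | hac'
  · exact treeLE_trans hYba (hmono (mem_invSet.2 ⟨hca, hac⟩)).2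
  · exact hYba
  · exact (hbetween c hac' hcb hac).elim

theorem mtubLE_of_invSet_subset {T Y : Finset (Finset (Fin n))} (hT : IsMaxTubing (pathGraph n) T)
    (hY : IsMaxTubing (pathGraph n) Y) (h : invSet T ⊆ invSet Y) : MTubLE (pathGraph n) T Y := by
  by_cases hYT : invSet Y ⊆ invSet T
  · rw [hT.eq_of_invSet_eq hY (h.antisymm hYT)]
    exact Relation.ReflTransGen.refl
  obtain ⟨b, c, hc, hcb⟩ := hT.exists_treeRotation_edge hY h hYT
  have hflip := hT.flipCover_treeRotation hc
  have : ((invSet (treeRotation T b c))ᶜ).ncard < ((invSet T)ᶜ).ncard :=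
    Set.ncard_lt_ncard (compl_lt_compl_iff_lt.2 hflip.invSet_ssubset)
  exact Relation.ReflTransGen.head hflip
    (mtubLE_of_invSet_subset (hT.isMaxTubing_treeRotation hc) hY
      (hT.invSet_treeRotation_subset hc h hcb))
termination_by ((invSet T)ᶜ).ncard

end IsMaxTubing

/-- Characterizations of the order on maximal tubings of the path graph. -/
theorem mtub_path_order_tfae (n : ℕ) (X Y : Finset (Finset (Fin n)))
    (hX : IsMaxTubing (pathGraph n) X) (hY : IsMaxTubing (pathGraph n) Y) :
    List.TFAE [MTubLE (pathGraph n) X Y,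
      invSet X ⊆ invSet Y,
      invSet X ⊆ invSet Y ∪ incSet Y,
      invSet X ∪ incSet X ⊆ invSet Y ∪ incSet Y,
      coinvSet Y ⊆ coinvSet X] := by
  tfae_have 1 → 2 := MTubLE.invSet_subset
  tfae_have 2 → 1 := hX.mtubLE_of_invSet_subset hY
  tfae_have 2 → 3 := fun h => h.trans Set.subset_union_left
  tfae_have 3 → 5 := hX.coinvSet_subset_of_invSet_subset_union hY
  tfae_have 5 → 2 := hX.invSet_subset_of_coinvSet_subset hY
  tfae_have 4 ↔ 5 := by
    rw [hX.invSet_union_incSet, hY.invSet_union_incSet]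
    exact Set.sdiff_subset_sdiff_iff_subset (coinvSet_subset_lt X) (coinvSet_subset_lt Y)
  tfae_finish
end
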